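/- arXiv:2505.03235 — 2 statements merged into one kernel-verified Lean document; each statement's English description precedes it below -/
import Mathlib

section
/- Let S and T be closed densely defined operators on a Hilbert space K which commute strongly, i.e. the von Neumann algebra generated by S commutes with the von Neumann algebra generated by T (where for a closed operator A with polar decomposition A = U H, the von Neumann algebra generated by A is the one generated by the partial isometry U and the bounded operator (1+H)^{-1}). If ξ ∈ Dom(ST) ∩ Dom(S), then ξ ∈ Dom(TS) and S T ξ = T S ξ. -/
/-!
Write `ξ = (1 + |T|)⁻¹ (ξ + |T| ξ)`. Bounded operators commuting with `U_S` and `(1 + |S|)⁻¹`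
map `Dom S` into itself and commute with `S` there; this applies to `U_T`, `U_T*` and
`(1 + |T|)⁻¹`. Hence `|T| ξ = U_T* T ξ ∈ Dom S`, and `S ξ = (1 + |T|)⁻¹ S (ξ + |T| ξ)` lies in
`Dom |T| = Dom T` with `|T| S ξ = S |T| ξ`. Finally
`T S ξ = U_T |T| S ξ = U_T S |T| ξ = S U_T |T| ξ = S T ξ`.
-/

open ContinuousLinearMap

noncomputable section

variable {K : Type*} [NormedAddCommGroup K] [InnerProductSpace ℂ K] [CompleteSpace K]

/-- The data of the polar decomposition `A = U ∘ Hm` of a closed densely defined operator `A`: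
`Hm = |A|` is a positive self-adjoint operator with the same domain as `A`, `U` is a partial
isometry whose initial space is the closure of the range of `Hm` (so that the decomposition is
the canonical one), and `R = (1 + Hm)⁻¹` is the bounded resolvent. -/
structure PolarData (A : K →ₗ.[ℂ] K) where
  U : K →L[ℂ] K
  Hm : K →ₗ.[ℂ] K
  R : K →L[ℂ] K
  domain_eq : Hm.domain = A.domain
  factor : ∀ (x : K) (hx : x ∈ Hm.domain) (hx' : x ∈ A.domain),
    A ⟨x, hx'⟩ = U (Hm ⟨x, hx⟩)
  selfAdjoint : Hm.adjoint = Hm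
  positive : ∀ (x : K) (hx : x ∈ Hm.domain), 0 ≤ (inner ℂ (Hm ⟨x, hx⟩) x : ℂ).re
  partialIsometry : U ∘L (adjoint U) ∘L U = U
  resolvent_left : ∀ (x : K) (hx : x ∈ Hm.domain), R (x + Hm ⟨x, hx⟩) = x
  resolvent_right : ∀ y : K, ∃ hy : R y ∈ Hm.domain, R y + Hm ⟨R y, hy⟩ = y
  initial : ∀ (x : K) (hx : x ∈ Hm.domain), (adjoint U) (U (Hm ⟨x, hx⟩)) = Hm ⟨x, hx⟩
  kernel : ∀ y : K,
    (∀ (x : K) (hx : x ∈ Hm.domain), (inner ℂ y (Hm ⟨x, hx⟩) : ℂ) = 0) → U y = 0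

/-- The von Neumann algebra `{A}''` generated by a closed densely defined operator `A`,
i.e. the double commutant of the partial isometry `U` and the bounded operator
`(1 + |A|)⁻¹` coming from the polar decomposition of `A` (together with their adjoints). -/
def generatedVN {A : K →ₗ.[ℂ] K} (pd : PolarData A) : Set (K →L[ℂ] K) :=
  Set.centralizer (Set.centralizer {pd.U, pd.R, adjoint pd.U, adjoint pd.R})

/-- `B A ⊆ A B` in the sense of unbounded operators. -/
def LinearPMap.CommutesWith (A : K →ₗ.[ℂ] K) (B : K →L[ℂ] K) : Prop :=
  ∀ x : A.domain, ∃ hBx : B x ∈ A.domain, A ⟨B x, hBx⟩ = B (A x)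

namespace PolarData

variable {A : K →ₗ.[ℂ] K} (pd : PolarData A)

lemma subset_generatedVN :
    ({pd.U, pd.R, adjoint pd.U, adjoint pd.R} : Set (K →L[ℂ] K)) ⊆ generatedVN pd :=
  Set.subset_centralizer_centralizer

lemma abs_eq_sub_resolvent (y : K) (hy : pd.R y ∈ pd.Hm.domain) :
    pd.Hm ⟨pd.R y, hy⟩ = y - pd.R y :=
  eq_sub_of_add_eq' (pd.resolvent_right y).2

lemma mem_abs_domain_iff {x : K} : x ∈ pd.Hm.domain ↔ x ∈ A.domain := by
  rw [pd.domain_eq]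

lemma abs_commutesWith {B : K →L[ℂ] K} (hR : Commute B pd.R) : pd.Hm.CommutesWith B := by
  intro ⟨x, hx⟩
  have hRy : pd.R (x + pd.Hm ⟨x, hx⟩) = x := pd.resolvent_left x hx
  have hRBy : pd.R (B (x + pd.Hm ⟨x, hx⟩)) = B x :=
    (DFunLike.congr_fun hR.eq _).symm.trans (congrArg B hRy)
  obtain ⟨hmem, -⟩ := pd.resolvent_right (B (x + pd.Hm ⟨x, hx⟩))
  refine ⟨hRBy ▸ hmem, ?_⟩
  calc pd.Hm ⟨B x, hRBy ▸ hmem⟩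
      = pd.Hm ⟨pd.R (B (x + pd.Hm ⟨x, hx⟩)), hmem⟩ := congrArg pd.Hm (Subtype.ext hRBy.symm)
    _ = B (pd.Hm ⟨x, hx⟩) := by rw [abs_eq_sub_resolvent, hRBy, map_add, add_sub_cancel_left]

lemma commutesWith {B : K →L[ℂ] K} (hR : Commute B pd.R) (hU : Commute B pd.U) :
    A.CommutesWith B := by
  intro x
  have hx : (x : K) ∈ pd.Hm.domain := pd.mem_abs_domain_iff.2 x.2
  obtain ⟨hBx, hHm⟩ := pd.abs_commutesWith hR ⟨x, hx⟩
  refine ⟨pd.mem_abs_domain_iff.1 hBx, ?_⟩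
  calc A ⟨B x, _⟩ = pd.U (pd.Hm ⟨B x, hBx⟩) := pd.factor _ hBx _
    _ = pd.U (B (pd.Hm ⟨x, hx⟩)) := congrArg pd.U hHm
    _ = B (pd.U (pd.Hm ⟨x, hx⟩)) := (DFunLike.congr_fun hU.eq _).symm
    _ = B (A x) := congrArg B (pd.factor x hx x.2).symm

lemma commutesWith_of_forall_commute {B : K →L[ℂ] K}
    (hB : ∀ a ∈ generatedVN pd, Commute a B) : A.CommutesWith B :=
  pd.commutesWith (hB _ (pd.subset_generatedVN (by simp))).symm
    (hB _ (pd.subset_generatedVN (by simp))).symm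

lemma abs_apply_of_commutesWith_resolvent {S : K →ₗ.[ℂ] K} (hS : S.CommutesWith pd.R)
    {ξ : K} (hξS : ξ ∈ S.domain) (hξ : ξ ∈ pd.Hm.domain) (hη : pd.Hm ⟨ξ, hξ⟩ ∈ S.domain) :
    ∃ hSξ : S ⟨ξ, hξS⟩ ∈ pd.Hm.domain, pd.Hm ⟨S ⟨ξ, hξS⟩, hSξ⟩ = S ⟨pd.Hm ⟨ξ, hξ⟩, hη⟩ := by
  set z : S.domain := ⟨ξ, hξS⟩ + ⟨pd.Hm ⟨ξ, hξ⟩, hη⟩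
  have hRz : pd.R z = ξ := pd.resolvent_left ξ hξ
  obtain ⟨_, hSRz⟩ := hS z
  have hSξ : S ⟨ξ, hξS⟩ = pd.R (S z) :=
    (congrArg S (Subtype.ext hRz.symm)).trans hSRz
  have hmem : pd.R (S z) ∈ pd.Hm.domain := (pd.resolvent_right (S z)).1
  refine ⟨hSξ ▸ hmem, ?_⟩
  calc pd.Hm ⟨S ⟨ξ, hξS⟩, _⟩ = pd.Hm ⟨pd.R (S z), hmem⟩ := congrArg pd.Hm (Subtype.ext hSξ)
    _ = S ⟨pd.Hm ⟨ξ, hξ⟩, hη⟩ := by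
      rw [abs_eq_sub_resolvent, ← hSξ, S.map_add, add_sub_cancel_left]

end PolarData

theorem statement0_general (S T : K →ₗ.[ℂ] K)
    (pdS : PolarData S) (pdT : PolarData T)
    (hcomm : ∀ a ∈ generatedVN pdS, ∀ b ∈ generatedVN pdT, Commute a b)
    (ξ : K) (hξT : ξ ∈ T.domain) (hξS : ξ ∈ S.domain)
    (hTξ : T ⟨ξ, hξT⟩ ∈ S.domain) :
    ∃ hSξ : S ⟨ξ, hξS⟩ ∈ T.domain,
      S ⟨T ⟨ξ, hξT⟩, hTξ⟩ = T ⟨S ⟨ξ, hξS⟩, hSξ⟩ := by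
  have hS : ∀ b ∈ ({pdT.U, pdT.R, adjoint pdT.U, adjoint pdT.R} : Set (K →L[ℂ] K)),
      S.CommutesWith b := fun b hb =>
    pdS.commutesWith_of_forall_commute fun a ha => hcomm a ha b (pdT.subset_generatedVN hb)
  have hξ : ξ ∈ pdT.Hm.domain := pdT.mem_abs_domain_iff.2 hξT
  have hTξ_eq : T ⟨ξ, hξT⟩ = pdT.U (pdT.Hm ⟨ξ, hξ⟩) := pdT.factor ξ hξ hξT
  have hη : pdT.Hm ⟨ξ, hξ⟩ ∈ S.domain := by
    have hadj : adjoint pdT.U (T ⟨ξ, hξT⟩) = pdT.Hm ⟨ξ, hξ⟩ := by rw [hTξ_eq, pdT.initial]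
    exact hadj ▸ (hS (adjoint pdT.U) (by simp) ⟨_, hTξ⟩).1
  obtain ⟨hSξ, hHmSξ⟩ := pdT.abs_apply_of_commutesWith_resolvent (hS pdT.R (by simp)) hξS hξ hη
  obtain ⟨hUη, hSUη⟩ := hS pdT.U (by simp) ⟨_, hη⟩
  refine ⟨pdT.mem_abs_domain_iff.1 hSξ, ?_⟩
  calc S ⟨T ⟨ξ, hξT⟩, hTξ⟩ = S ⟨pdT.U (pdT.Hm ⟨ξ, hξ⟩), hUη⟩ := congrArg S (Subtype.ext hTξ_eq)
    _ = pdT.U (S ⟨pdT.Hm ⟨ξ, hξ⟩, hη⟩) := hSUη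
    _ = pdT.U (pdT.Hm ⟨S ⟨ξ, hξS⟩, hSξ⟩) := by rw [hHmSξ]
    _ = T ⟨S ⟨ξ, hξS⟩, _⟩ := (pdT.factor _ hSξ _).symm

/-- If `S` and `T` are closed densely defined operators on a Hilbert space which commute
strongly (the von Neumann algebras they generate commute elementwise), and
`ξ ∈ Dom(ST) ∩ Dom(S)`, then `ξ ∈ Dom(TS)` and `STξ = TSξ`. -/
theorem statement0 (S T : K →ₗ.[ℂ] K)
    (hSdense : Dense (S.domain : Set K)) (hTdense : Dense (T.domain : Set K))
    (hSclosed : S.IsClosed) (hTclosed : T.IsClosed)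
    (pdS : PolarData S) (pdT : PolarData T)
    (hcomm : ∀ a ∈ generatedVN pdS, ∀ b ∈ generatedVN pdT, Commute a b)
    (ξ : K) (hξT : ξ ∈ T.domain) (hξS : ξ ∈ S.domain)
    (hTξ : T ⟨ξ, hξT⟩ ∈ S.domain) :
    ∃ hSξ : S ⟨ξ, hξS⟩ ∈ T.domain,
      S ⟨T ⟨ξ, hξT⟩, hTξ⟩ = T ⟨S ⟨ξ, hξS⟩, hSξ⟩ :=
  statement0_general S T pdS pdT hcomm ξ hξT hξS hTξ
end
end

section
/- Let D be a positive self-adjoint operator on a Hilbert space H, let ξ, η ∈ H, and let δ > 0. If ⟨e^{itD} ξ, η⟩ = 0 for all real t ∈ (-δ, δ), then ⟨e^{itD} ξ, η⟩ = 0 for all t ∈ ℝ. -/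
/-!
By polarization, `⟨e^{izD}ξ, η⟩` is a linear combination of four integrals `∫ e^{izλ} dμ(λ)`
against finite measures carried by `[0, ∞)`, hence a function `G` that is bounded and continuous
on the closed upper half-plane and holomorphic inside. Instead of reflecting across the real
axis, transport `G` to the unit disc by the Cayley transform: it becomes a bounded holomorphic
`f` which is continuous up to, and vanishes on, an open arc of the circle. Finitely many rotated
copies of the arc cover the circle, so `g z = ∏ f (u z)` over these rotations is continuous on
the closed disc and vanishes on the circle. The maximum modulus principle gives `g = 0`, the
identity theorem then forces one factor, hence `f`, to vanish identically, and so `G = 0` on the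
open half-plane and, by continuity, on the real line.
-/

open Complex Metric MeasureTheory Filter Set Topology

theorem continuousWithinAt_finset_prod_of_eq_zero {X ι 𝕜 : Type*} [TopologicalSpace X]
    [NormedField 𝕜] {t : Finset ι} {F : ι → X → 𝕜} {s : Set X} {x : X} {M : ℝ}
    (hbdd : ∀ i ∈ t, ∀ y ∈ s, ‖F i y‖ ≤ M) {i₀ : ι} (hi₀ : i₀ ∈ t)
    (hcont : ContinuousWithinAt (F i₀) s x) (hzero : F i₀ x = 0) :
    ContinuousWithinAt (fun y => ∏ i ∈ t, F i y) s x := by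
  classical
  have hsplit : (fun y => ∏ i ∈ t, F i y) = fun y => F i₀ y * ∏ i ∈ t.erase i₀, F i y :=
    funext fun y => (Finset.mul_prod_erase t (F · y) hi₀).symm
  have hrest : IsBoundedUnder (· ≤ ·) (𝓝[s] x) fun y => ‖∏ i ∈ t.erase i₀, F i y‖ :=
    ⟨M ^ (t.erase i₀).card, eventually_mem_nhdsWithin.mono fun y hy => by
      change ‖_‖ ≤ _
      rw [norm_prod, ← Finset.prod_const]
      exact Finset.prod_le_prod (fun _ _ => norm_nonneg _)
        fun i hi => hbdd i (Finset.mem_of_mem_erase hi) y hy⟩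
  rw [ContinuousWithinAt, hzero] at hcont
  rw [ContinuousWithinAt, Finset.prod_eq_zero hi₀ hzero, hsplit]
  exact hcont.zero_mul_isBoundedUnder_le hrest

theorem AnalyticAt.exists_eventually_eq_zero_of_finset_prod {𝕜 ι : Type*}
    [NontriviallyNormedField 𝕜] {t : Finset ι} {F : ι → 𝕜 → 𝕜} {z₀ : 𝕜}
    (hF : ∀ i ∈ t, AnalyticAt 𝕜 (F i) z₀) (h : ∀ᶠ z in 𝓝 z₀, ∏ i ∈ t, F i z = 0) :
    ∃ i ∈ t, ∀ᶠ z in 𝓝 z₀, F i z = 0 := by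
  by_contra hne
  have hall : ∀ᶠ z in 𝓝[≠] z₀, ∀ i ∈ t, F i z ≠ 0 := (eventually_all_finset t).2 fun i hi =>
    (hF i hi).eventually_eq_zero_or_eventually_ne_zero.resolve_left fun h => hne ⟨i, hi, h⟩
  obtain ⟨z, hz, hz'⟩ := (hall.and (h.filter_mono nhdsWithin_le_nhds)).exists
  exact Finset.prod_ne_zero_iff.2 hz hz'

theorem exists_finset_rotations_cover {U : Set ℂ} (hU : IsOpen U)
    (hne : (U ∩ sphere (0 : ℂ) 1).Nonempty) :
    ∃ R : Finset ℂ, (∀ u ∈ R, ‖u‖ = 1) ∧ ∀ z ∈ sphere (0 : ℂ) 1, ∃ u ∈ R, u * z ∈ U := by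
  obtain ⟨p, hpU, hp⟩ := hne
  rw [mem_sphere_zero_iff_norm] at hp
  have hq : ∀ q ∈ sphere (0 : ℂ) 1, q ≠ 0 := fun q hq => ne_zero_of_mem_unit_sphere ⟨q, hq⟩
  obtain ⟨t, hts, hcover⟩ := (isCompact_sphere (0 : ℂ) 1).elim_nhds_subcover
    (fun q => (p / q * ·) ⁻¹' U) fun q hq' =>
      (hU.preimage (continuous_const_mul _)).mem_nhds (by simpa [div_mul_cancel₀ p (hq q hq')])
  refine ⟨t.image (p / ·), ?_, fun z hz => ?_⟩
  · simp only [Finset.mem_image]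
    rintro _ ⟨q, hqt, rfl⟩
    rw [norm_div, hp, mem_sphere_zero_iff_norm.1 (hts q hqt), div_one]
  · obtain ⟨q, hqt, hzq⟩ := mem_iUnion₂.1 (hcover hz)
    exact ⟨p / q, Finset.mem_image_of_mem _ hqt, hzq⟩

theorem DifferentiableOn.eqOn_zero_of_eventually_mul_eq_zero {f : ℂ → ℂ} {U : Set ℂ}
    (hdiff : DifferentiableOn ℂ f U) (hU : IsOpen U) (hUc : IsPreconnected U) (h0 : 0 ∈ U)
    {u : ℂ} (hu : u ≠ 0) (hfu : ∀ᶠ z in 𝓝 0, f (u * z) = 0) : EqOn f 0 U := by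
  have hf : ∀ᶠ w in 𝓝 0, f w = 0 := by
    have hrot : Tendsto (u⁻¹ * ·) (𝓝 0) (𝓝 0) := by
      simpa using (continuous_const_mul u⁻¹).tendsto 0
    filter_upwards [hrot.eventually hfu] with w hw
    simpa [mul_inv_cancel_left₀ hu] using hw
  exact (hdiff.analyticOnNhd hU).eqOn_zero_of_preconnected_of_eventuallyEq_zero hUc h0 hf

theorem eqOn_zero_of_eq_zero_on_arc {f : ℂ → ℂ} {M : ℝ}
    (hbdd : ∀ z ∈ closedBall (0 : ℂ) 1, ‖f z‖ ≤ M) (hdiff : DifferentiableOn ℂ f (ball 0 1))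
    {U : Set ℂ} (hU : IsOpen U) (hne : (U ∩ sphere (0 : ℂ) 1).Nonempty)
    (hcont : ∀ z ∈ U ∩ sphere (0 : ℂ) 1, ContinuousWithinAt f (closedBall 0 1) z)
    (hzero : ∀ z ∈ U ∩ sphere (0 : ℂ) 1, f z = 0) :
    EqOn f 0 (ball 0 1) := by
  obtain ⟨R, hR, hcover⟩ := exists_finset_rotations_cover hU hne
  have hmaps : ∀ u ∈ R, MapsTo (u * ·) (ball 0 1) (ball 0 1) ∧
      MapsTo (u * ·) (closedBall 0 1) (closedBall 0 1) ∧
      MapsTo (u * ·) (sphere 0 1) (sphere 0 1) := fun u hu => by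
    simp [MapsTo, hR u hu]
  set g : ℂ → ℂ := fun z => ∏ u ∈ R, f (u * z)
  have hgdiff : DifferentiableOn ℂ g (ball 0 1) :=
    DifferentiableOn.fun_finsetProd fun u hu =>
      hdiff.comp (by fun_prop) (hmaps u hu).1
  have hgcont : ContinuousOn g (closedBall 0 1) := fun z hz => by
    rcases ball_union_sphere.symm.subset hz with hz | hz
    · exact (hgdiff.differentiableAt (isOpen_ball.mem_nhds hz)).continuousAt.continuousWithinAt
    obtain ⟨u, hu, huz⟩ := hcover z hz
    exact continuousWithinAt_finset_prod_of_eq_zero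
      (fun u' hu' y hy => hbdd _ ((hmaps u' hu').2.1 hy)) hu
      ((hcont _ ⟨huz, (hmaps u hu).2.2 hz⟩).comp (continuous_const_mul u).continuousWithinAt
        (hmaps u hu).2.1)
      (hzero _ ⟨huz, (hmaps u hu).2.2 hz⟩)
  have hg : EqOn g 0 (ball 0 1) := by
    refine Complex.eqOn_of_eqOn_frontier isBounded_ball
      ⟨hgdiff, by rwa [closure_ball _ one_ne_zero]⟩ diffContOnCl_const ?_
    rw [frontier_ball _ one_ne_zero]
    intro z hz
    obtain ⟨u, hu, huz⟩ := hcover z hz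
    exact Finset.prod_eq_zero hu (hzero _ ⟨huz, (hmaps u hu).2.2 hz⟩)
  obtain ⟨u, hu, hfu⟩ := AnalyticAt.exists_eventually_eq_zero_of_finset_prod
    (fun u hu => (hdiff.comp (by fun_prop) (hmaps u hu).1).analyticAt
      (ball_mem_nhds 0 one_pos))
    (eventually_of_mem (ball_mem_nhds 0 one_pos) hg)
  exact hdiff.eqOn_zero_of_eventually_mul_eq_zero isOpen_ball (convex_ball 0 1).isPreconnected
    (mem_ball_self one_pos) (by simp [← norm_pos_iff, hR u hu]) hfu

-- By the convention `x / 0 = 0`, `cayleyToUpper 1 = 0` lies in the closed upper half-plane,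
-- so no case split at `1` is needed when composing with functions defined there.
noncomputable def cayleyToUpper (ζ : ℂ) : ℂ := I * (1 + ζ) / (1 - ζ)

theorem cayleyToUpper_im (ζ : ℂ) :
    (cayleyToUpper ζ).im = (1 - normSq ζ) / normSq (1 - ζ) := by
  simp only [cayleyToUpper, div_im, normSq_apply, mul_re, mul_im, add_re, add_im, sub_re, sub_im,
    one_re, one_im, I_re, I_im]
  ring

theorem cayleyToUpper_im_nonneg {ζ : ℂ} (hζ : ‖ζ‖ ≤ 1) : 0 ≤ (cayleyToUpper ζ).im := by
  rw [cayleyToUpper_im, ← Complex.sq_norm]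
  exact div_nonneg (by nlinarith [norm_nonneg ζ]) (normSq_nonneg _)

theorem cayleyToUpper_im_pos {ζ : ℂ} (hζ : ‖ζ‖ < 1) : 0 < (cayleyToUpper ζ).im := by
  have hζ1 : 1 - ζ ≠ 0 := sub_ne_zero.2 fun h => by simp [← h] at hζ
  rw [cayleyToUpper_im, ← Complex.sq_norm]
  exact div_pos (by nlinarith [norm_nonneg ζ]) (normSq_pos.2 hζ1)

theorem cayleyToUpper_im_eq_zero {ζ : ℂ} (hζ : ‖ζ‖ = 1) : (cayleyToUpper ζ).im = 0 := by
  rw [cayleyToUpper_im, ← Complex.sq_norm, hζ]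
  simp

theorem cayleyToUpper_eq_re {ζ : ℂ} (hζ : ‖ζ‖ = 1) :
    cayleyToUpper ζ = (cayleyToUpper ζ).re :=
  Complex.ext rfl (by simpa using cayleyToUpper_im_eq_zero hζ)

theorem differentiableAt_cayleyToUpper {ζ : ℂ} (hζ : ζ ≠ 1) :
    DifferentiableAt ℂ cayleyToUpper ζ :=
  (differentiableAt_const _ |>.mul (by fun_prop)).div (by fun_prop) (sub_ne_zero.2 hζ.symm)

theorem exists_cayleyToUpper_eq {w : ℂ} (hw : 0 < w.im) :
    ∃ ζ ∈ ball (0 : ℂ) 1, cayleyToUpper ζ = w := by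
  have hwI : w + I ≠ 0 := fun h => by
    have := congrArg im h
    simp only [add_im, I_im, zero_im] at this
    linarith
  refine ⟨(w - I) / (w + I), ?_, ?_⟩
  · rw [mem_ball_zero_iff, norm_div, div_lt_one (norm_pos_iff.2 hwI), norm_def, norm_def]
    apply Real.sqrt_lt_sqrt (normSq_nonneg _)
    simp only [normSq_apply, sub_re, sub_im, add_re, add_im, I_re, I_im]
    nlinarith
  · have hden : 1 - (w - I) / (w + I) ≠ 0 := by
      rw [sub_ne_zero, ne_comm, Ne, div_eq_one_iff_eq hwI, sub_eq_add_neg, add_right_inj]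
      exact fun h => by norm_num [Complex.ext_iff] at h
    simp only [cayleyToUpper]
    field_simp
    ring

structure IsBddHolomorphicUpperHalfPlane (G : ℂ → ℂ) : Prop where
  differentiableAt : ∀ z : ℂ, 0 < z.im → DifferentiableAt ℂ G z
  continuousOn : ContinuousOn G {z : ℂ | 0 ≤ z.im}
  exists_bound : ∃ M, ∀ z : ℂ, 0 ≤ z.im → ‖G z‖ ≤ M

namespace IsBddHolomorphicUpperHalfPlane

variable {F G : ℂ → ℂ}

theorem add (hF : IsBddHolomorphicUpperHalfPlane F) (hG : IsBddHolomorphicUpperHalfPlane G) :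
    IsBddHolomorphicUpperHalfPlane (fun z => F z + G z) := by
  obtain ⟨M, hM⟩ := hF.exists_bound
  obtain ⟨N, hN⟩ := hG.exists_bound
  refine ⟨fun z hz => (hF.differentiableAt z hz).add (hG.differentiableAt z hz),
    hF.continuousOn.add hG.continuousOn, M + N, fun z hz => ?_⟩
  exact (norm_add_le _ _).trans (add_le_add (hM z hz) (hN z hz))

theorem const_mul (hG : IsBddHolomorphicUpperHalfPlane G) (c : ℂ) :
    IsBddHolomorphicUpperHalfPlane (fun z => c * G z) := by
  obtain ⟨M, hM⟩ := hG.exists_bound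
  refine ⟨fun z hz => (hG.differentiableAt z hz).const_mul c,
    continuousOn_const.mul hG.continuousOn, ‖c‖ * M, fun z hz => ?_⟩
  rw [norm_mul]
  exact mul_le_mul_of_nonneg_left (hM z hz) (norm_nonneg c)

theorem sub (hF : IsBddHolomorphicUpperHalfPlane F) (hG : IsBddHolomorphicUpperHalfPlane G) :
    IsBddHolomorphicUpperHalfPlane (fun z => F z - G z) := by
  simpa only [sub_eq_add_neg, neg_one_mul] using hF.add (hG.const_mul (-1))

theorem div_const (hG : IsBddHolomorphicUpperHalfPlane G) (c : ℂ) :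
    IsBddHolomorphicUpperHalfPlane (fun z => G z / c) := by
  simpa only [div_eq_inv_mul] using hG.const_mul c⁻¹

theorem eqOn_zero_of_eq_zero_on_Ioo
    (hG : IsBddHolomorphicUpperHalfPlane G) {δ : ℝ} (hδ : 0 < δ)
    (hzero : ∀ t : ℝ, -δ < t → t < δ → G t = 0) : EqOn G 0 {z : ℂ | 0 ≤ z.im} := by
  obtain ⟨M, hM⟩ := hG.exists_bound
  set U := {ζ : ℂ | ζ ≠ 1} ∩ cayleyToUpper ⁻¹' ball 0 δ
  have hU : IsOpen U := ContinuousOn.isOpen_inter_preimage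
    (fun ζ hζ => (differentiableAt_cayleyToUpper hζ).continuousAt.continuousWithinAt)
    isOpen_ne isOpen_ball
  have hdisc : EqOn (G ∘ cayleyToUpper) 0 (ball 0 1) := by
    refine eqOn_zero_of_eq_zero_on_arc (M := M)
      (fun ζ hζ => hM _ (cayleyToUpper_im_nonneg (mem_closedBall_zero_iff.1 hζ)))
      (fun ζ hζ => ?_) hU ⟨-1, ⟨?_, ?_⟩, by simp⟩ (fun ζ hζ => ?_) (fun ζ hζ => ?_)
    · have hζ1 : ζ ≠ 1 := fun h => by simp [h] at hζ
      exact ((hG.differentiableAt _ (cayleyToUpper_im_pos (mem_ball_zero_iff.1 hζ))).comp ζ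
        (differentiableAt_cayleyToUpper hζ1)).differentiableWithinAt
    · norm_num [Complex.ext_iff]
    · simpa [cayleyToUpper] using hδ
    · have hmem : cayleyToUpper ζ ∈ {z : ℂ | 0 ≤ z.im} :=
        (cayleyToUpper_im_eq_zero (mem_sphere_zero_iff_norm.1 hζ.2)).ge
      exact (hG.continuousOn _ hmem).comp
        (differentiableAt_cayleyToUpper hζ.1.1).continuousAt.continuousWithinAt
        fun ξ hξ => cayleyToUpper_im_nonneg (mem_closedBall_zero_iff.1 hξ)
    · obtain ⟨⟨-, hδζ⟩, hζ⟩ := hζ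
      have hreal := cayleyToUpper_eq_re (mem_sphere_zero_iff_norm.1 hζ)
      rw [mem_preimage, hreal, mem_ball_zero_iff, norm_real, Real.norm_eq_abs] at hδζ
      rw [Function.comp_apply, hreal]
      exact hzero _ (abs_lt.1 hδζ).1 (abs_lt.1 hδζ).2
  have hupper : EqOn G 0 {z : ℂ | 0 < z.im} := fun w hw => by
    obtain ⟨ζ, hζ, rfl⟩ := exists_cayleyToUpper_eq hw
    exact hdisc hζ
  exact hupper.of_subset_closure hG.continuousOn continuousOn_const
    (fun z (hz : 0 < z.im) => hz.le) (by simp)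

end IsBddHolomorphicUpperHalfPlane

theorem norm_cexp_I_mul_le_one {z : ℂ} (hz : 0 ≤ z.im) {l : ℝ} (hl : 0 ≤ l) :
    ‖cexp (I * z * l)‖ ≤ 1 := by
  rw [norm_exp, Real.exp_le_one_iff]
  simpa using mul_nonneg hz hl

theorem norm_cexp_I_mul_mul_le_inv {ε : ℝ} (hε : 0 < ε) {z : ℂ} (hz : ε ≤ z.im) {l : ℝ}
    (hl : 0 ≤ l) : ‖cexp (I * z * l) * (I * l)‖ ≤ ε⁻¹ := by
  have hexp : ‖cexp (I * z * l)‖ ≤ Real.exp (-(ε * l)) := by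
    rw [norm_exp, Real.exp_le_exp]
    simpa using mul_le_mul_of_nonneg_right hz hl
  have hlin : ε * l ≤ Real.exp (ε * l) := by linarith [Real.add_one_le_exp (ε * l)]
  calc ‖cexp (I * z * l) * (I * l)‖ ≤ Real.exp (-(ε * l)) * l := by
        rw [norm_mul, norm_mul, norm_I, one_mul, norm_real, Real.norm_of_nonneg hl]
        exact mul_le_mul_of_nonneg_right hexp hl
    _ ≤ ε⁻¹ := by
        rw [Real.exp_neg, ← div_eq_inv_mul, div_le_iff₀ (Real.exp_pos _)]
        rw [inv_mul_eq_div, le_div_iff₀ hε]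
        linarith

section FourierLaplace

variable {m : Measure ℝ} [IsFiniteMeasure m]

theorem norm_integral_cexp_I_mul_le (hm : ∀ᵐ l ∂m, 0 ≤ l) {z : ℂ} (hz : 0 ≤ z.im) :
    ‖∫ l, cexp (I * z * l) ∂m‖ ≤ m.real univ := by
  simpa using norm_integral_le_of_norm_le_const (C := 1)
    (hm.mono fun l hl => norm_cexp_I_mul_le_one hz hl)

theorem continuousOn_integral_cexp_I_mul (hm : ∀ᵐ l ∂m, 0 ≤ l) :
    ContinuousOn (fun z => ∫ l, cexp (I * z * l) ∂m) {z : ℂ | 0 ≤ z.im} :=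
  continuousOn_of_dominated (bound := fun _ => 1) (fun _ _ => by fun_prop)
    (fun _ hz => hm.mono fun _ hl => norm_cexp_I_mul_le_one hz hl) (integrable_const 1)
    (.of_forall fun _ => by fun_prop)

theorem differentiableAt_integral_cexp_I_mul (hm : ∀ᵐ l ∂m, 0 ≤ l) {z₀ : ℂ} (hz₀ : 0 < z₀.im) :
    DifferentiableAt ℂ (fun z => ∫ l, cexp (I * z * l) ∂m) z₀ := by
  set ε := z₀.im / 2 with hε_def
  have hε : 0 < ε := half_pos hz₀
  have him : ∀ z ∈ ball z₀ ε, ε ≤ z.im := fun z hz => by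
    have := (abs_le.1 (abs_im_le_norm (z - z₀))).1
    rw [mem_ball, dist_eq] at hz
    simp only [sub_im] at this
    linarith [hε_def]
  have hderiv : ∀ (l : ℝ) (z : ℂ),
      HasDerivAt (fun z => cexp (I * z * l)) (cexp (I * z * l) * (I * l)) z := fun l z => by
    simpa using (((hasDerivAt_id z).const_mul I).mul_const (l : ℂ)).cexp
  exact (hasDerivAt_integral_of_dominated_loc_of_deriv_le (bound := fun _ => ε⁻¹)
    (ball_mem_nhds z₀ hε) (.of_forall fun _ => by fun_prop)
    ((integrable_const (1 : ℝ)).mono' (by fun_prop)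
      (hm.mono fun _ hl => norm_cexp_I_mul_le_one hz₀.le hl))
    (by fun_prop)
    (hm.mono fun _ hl z hz => norm_cexp_I_mul_mul_le_inv hε (him z hz) hl)
    (integrable_const _) (.of_forall fun l z _ => hderiv l z)).2.differentiableAt

theorem isBddHolomorphicUpperHalfPlane_integral_cexp_I_mul (hm : ∀ᵐ l ∂m, 0 ≤ l) :
    IsBddHolomorphicUpperHalfPlane (fun z => ∫ l, cexp (I * z * l) ∂m) :=
  ⟨fun _ hz => differentiableAt_integral_cexp_I_mul hm hz, continuousOn_integral_cexp_I_mul hm,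
    m.real univ, fun _ hz => norm_integral_cexp_I_mul_le hm hz⟩

end FourierLaplace

open ContinuousLinearMap MeasureTheory

noncomputable section

variable {H : Type*} [NormedAddCommGroup H] [InnerProductSpace ℂ H] [CompleteSpace H]

theorem statement5_general (e : ℂ → (H →L[ℂ] H)) (μ : H → Measure ℝ)
    (hfin : ∀ ξ : H, IsFiniteMeasure (μ ξ))
    (hsupp : ∀ ξ : H, μ ξ (Set.Iio 0) = 0)
    (hdiag : ∀ (ξ : H) (z : ℂ), 0 ≤ z.im →
      (inner ℂ (e z ξ) ξ : ℂ) = ∫ l : ℝ, Complex.exp (Complex.I * z * (l : ℂ)) ∂(μ ξ))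
    (ξ η : H) (δ : ℝ) (hδ : 0 < δ)
    (hvanish : ∀ t : ℝ, -δ < t → t < δ → (inner ℂ (e (t : ℂ) ξ) η : ℂ) = 0) :
    ∀ t : ℝ, (inner ℂ (e (t : ℂ) ξ) η : ℂ) = 0 := by
  set F : H → ℂ → ℂ := fun v z => ∫ l : ℝ, cexp (I * z * l) ∂(μ v)
  have hpos : ∀ v, ∀ᵐ l ∂(μ v), 0 ≤ l := fun v =>
    ae_iff.2 (by simp only [not_le]; exact hsupp v)
  have hF : ∀ v, IsBddHolomorphicUpperHalfPlane (F v) := fun v =>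
    have := hfin v
    isBddHolomorphicUpperHalfPlane_integral_cexp_I_mul (hpos v)
  set G : ℂ → ℂ := fun z =>
    (F (ξ + η) z - F (ξ - η) z - I * F (ξ + I • η) z + I * F (ξ - I • η) z) / 4
  have hG : IsBddHolomorphicUpperHalfPlane G :=
    ((((hF _).sub (hF _)).sub ((hF _).const_mul I)).add ((hF _).const_mul I)).div_const 4
  have hpolar : ∀ z : ℂ, 0 ≤ z.im → inner ℂ (e z ξ) η = G z := fun z hz => by
    simp only [G, F, ← hdiag _ z hz]
    exact inner_map_polarization' (e z).toLinearMap ξ η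
  intro t
  rw [hpolar t (by simp)]
  exact hG.eqOn_zero_of_eq_zero_on_Ioo hδ
    (fun s hs hs' => (hpolar s (by simp)).symm.trans (hvanish s hs hs')) (by simp)

/-- Let `D` be a positive self-adjoint operator on a Hilbert space `H` and let
`e z = e^{izD}` (for `Im z ≥ 0`) be the family of bounded operators obtained from the Borel
functional calculus of `D`, characterized by its spectral data as follows: for each vector
`ξ` the diagonal spectral measure `μ ξ = ⟨P(·)ξ, ξ⟩` is a finite positive measure supported
in `[0,∞)` with total mass `‖ξ‖²` and `⟨e^{izD} ξ, ξ⟩ = ∫ e^{izλ} dμ_ξ(λ)`; moreover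
`e^{i·0·D} = 1`, `e^{izD} e^{iwD} = e^{i(z+w)D}` and `(e^{izD})* = e^{i(-z̄)D}`.
In particular `t ↦ e^{itD}` (t real) is the unitary one-parameter group generated by `D`.
If `ξ, η ∈ H`, `δ > 0` and `⟨e^{itD} ξ, η⟩ = 0` for all real `t ∈ (-δ, δ)`, then
`⟨e^{itD} ξ, η⟩ = 0` for all real `t`. -/
theorem statement5 (e : ℂ → (H →L[ℂ] H)) (μ : H → Measure ℝ)
    (hfin : ∀ ξ : H, IsFiniteMeasure (μ ξ))
    (hsupp : ∀ ξ : H, μ ξ (Set.Iio 0) = 0)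
    (htotal : ∀ ξ : H, μ ξ Set.univ = ENNReal.ofReal (‖ξ‖ ^ 2))
    (hone : e 0 = 1)
    (hdiag : ∀ (ξ : H) (z : ℂ), 0 ≤ z.im →
      (inner ℂ (e z ξ) ξ : ℂ) = ∫ l : ℝ, Complex.exp (Complex.I * z * (l : ℂ)) ∂(μ ξ))
    (hsemigroup : ∀ z w : ℂ, 0 ≤ z.im → 0 ≤ w.im → e (z + w) = e z ∘L e w)
    (hadjoint : ∀ z : ℂ, 0 ≤ z.im → adjoint (e z) = e (-(starRingEnd ℂ z)))
    (ξ η : H) (δ : ℝ) (hδ : 0 < δ)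
    (hvanish : ∀ t : ℝ, -δ < t → t < δ → (inner ℂ (e (t : ℂ) ξ) η : ℂ) = 0) :
    ∀ t : ℝ, (inner ℂ (e (t : ℂ) ξ) η : ℂ) = 0 :=
  statement5_general e μ hfin hsupp hdiag ξ η δ hδ hvanish
end
end
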